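/- Let X₁, X₂ be Banach spaces with measures of non-compactness η₁ on X₁* and η₂ on X₂*, and let T : X₁* → X₂* be a weak*-continuous linear operator. Suppose there exists λ > 0 such that η₂(T(A)) ≤ λ η₁(A) for every weak*-compact subset A of X₁*. Then: (1) for every weak*-compact A ⊆ X₁* and ε > 0, [η₂]'_{λε}(T(A)) ⊆ T([η₁]'_ε(A)); (2) if [η₁]^ω_ε(A) = ∅, then [η₂]^ω_{λε}(T(A)) = ∅. -/

import Mathlib

open Filter Topology Set Pointwise

noncomputable section

namespace Szlenk

variable {E : Type*}

/-- The fragment derivation `[η]'_ε(A)` associated to a set function `η`: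
the points of `A` all of whose neighborhoods `U` satisfy `η (A ∩ cl U) ≥ ε`. -/
def frag [TopologicalSpace E] (η : Set E → ℝ) (ε : ℝ) (A : Set E) : Set E :=
  {x | x ∈ A ∧ ∀ U ∈ 𝓝 x, ε ≤ η (A ∩ closure U)}

/-- Transfinite iterates `[η]^γ_ε(A)` of the fragment derivation. -/
def fragIter [TopologicalSpace E] (η : Set E → ℝ) (ε : ℝ) (A : Set E) (γ : Ordinal.{0}) :
    Set E :=
  Ordinal.limitRecOn γ A (fun _ S => frag η ε S)
    (fun γ _ ih => ⋂ β : {β : Ordinal.{0} // β < γ}, ih β.1 β.2)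

/-- The `ω`-iterated measure `η^ω (A) = inf {ε > 0 : [η]^ω_ε(A) = ∅}`. -/
def etaOmega [TopologicalSpace E] (η : Set E → ℝ) (A : Set E) : ℝ :=
  sInf {ε : ℝ | 0 < ε ∧ fragIter η ε A Ordinal.omega0 = ∅}

/-- The iterates `η^{ω^n}` (with `η^{ω^0} := η` and `η^{ω^{n+1}} := (η^{ω^n})^ω`). -/
def omegaPow [TopologicalSpace E] (η : Set E → ℝ) : ℕ → Set E → ℝ
  | 0 => η
  | n + 1 => etaOmega (omegaPow η n)

/-- `η` is a measure of non compactness (with respect to the closed unit ball `ball`):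
it is nonnegative, vanishes on singletons, is monotone, satisfies
`η (A ∪ B) = max (η A) (η B)`, and `η (A + l • ball) ≤ η A + l * b` for some `b > 0`.
All conditions are required on (weak*-)compact sets only. -/
structure IsMNCOn [TopologicalSpace E] [AddCommGroup E] [Module ℝ E]
    (ball : Set E) (η : Set E → ℝ) : Prop where
  nonneg : ∀ A : Set E, IsCompact A → 0 ≤ η A
  singleton : ∀ x : E, η {x} = 0
  mono : ∀ A B : Set E, IsCompact A → IsCompact B → A ⊆ B → η A ≤ η B
  union : ∀ A B : Set E, IsCompact A → IsCompact B → η (A ∪ B) = max (η A) (η B)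
  ball_add : ∃ b > 0, ∀ A : Set E, IsCompact A → ∀ l : ℝ, 0 < l →
    η (A + l • ball) ≤ η A + l * b

/-- `η` is a measure of non compactness with the explicit constant `b` in property (iii). -/
structure IsMNCWith [TopologicalSpace E] [AddCommGroup E] [Module ℝ E]
    (ball : Set E) (b : ℝ) (η : Set E → ℝ) : Prop where
  b_pos : 0 < b
  nonneg : ∀ A : Set E, IsCompact A → 0 ≤ η A
  singleton : ∀ x : E, η {x} = 0
  mono : ∀ A B : Set E, IsCompact A → IsCompact B → A ⊆ B → η A ≤ η B
  union : ∀ A B : Set E, IsCompact A → IsCompact B → η (A ∪ B) = max (η A) (η B)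
  ball_add : ∀ A : Set E, IsCompact A → ∀ l : ℝ, 0 < l →
    η (A + l • ball) ≤ η A + l * b

/-- A sublinear measure of non compactness: homogeneous and subadditive. -/
structure IsSublinear [TopologicalSpace E] [AddCommGroup E] [Module ℝ E]
    (η : Set E → ℝ) : Prop where
  homog : ∀ (l : ℝ) (A : Set E), IsCompact A → η (l • A) = |l| * η A
  subadd : ∀ A B : Set E, IsCompact A → IsCompact B → η (A + B) ≤ η A + η B

variable {X : Type*} [NormedAddCommGroup X] [NormedSpace ℝ X]

/-- The dual norm on `X*` (the dual being equipped with its weak* topology). -/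
def dnorm (f : WeakDual ℝ X) : ℝ := ‖WeakDual.toStrongDual f‖

/-- The closed unit ball of `X*`. -/
def dualBall (X : Type*) [NormedAddCommGroup X] [NormedSpace ℝ X] :
    Set (WeakDual ℝ X) := {f | dnorm f ≤ 1}

/-- The slice derivation `⟨η⟩'_ε(A)`: the points of `A` such that every weak*-closed
halfspace containing them meets `A` in a set of `η`-measure at least `ε`. -/
def sliceD (η : Set (WeakDual ℝ X) → ℝ) (ε : ℝ) (A : Set (WeakDual ℝ X)) :
    Set (WeakDual ℝ X) :=
  {x | x ∈ A ∧ ∀ (f : X) (c : ℝ), c ≤ x f → ε ≤ η (A ∩ {y | c ≤ y f})}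

/-- Transfinite iterates `⟨η⟩^γ_ε(A)` of the slice derivation. -/
def sliceIter (η : Set (WeakDual ℝ X) → ℝ) (ε : ℝ) (A : Set (WeakDual ℝ X))
    (γ : Ordinal.{0}) : Set (WeakDual ℝ X) :=
  Ordinal.limitRecOn γ A (fun _ S => sliceD η ε S)
    (fun γ _ ih => ⋂ β : {β : Ordinal.{0} // β < γ}, ih β.1 β.2)

/-- A weak*-closed halfspace of `X*`. -/
def IsHalfspace (H : Set (WeakDual ℝ X)) : Prop :=
  ∃ (f : X) (c : ℝ), H = {y : WeakDual ℝ X | c ≤ y f}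

/-- The Kuratowski measure of non compactness associated to a (dual) norm `Nd`:
the infimum of all `ε > 0` such that `A` can be covered by finitely many balls of
diameter `ε` (i.e. of radius `ε / 2`). -/
def kurN (Nd : WeakDual ℝ X → ℝ) (A : Set (WeakDual ℝ X)) : ℝ :=
  sInf {ε : ℝ | 0 < ε ∧
    ∃ F : Finset (WeakDual ℝ X), A ⊆ ⋃ c ∈ F, {y | Nd (y - c) ≤ ε / 2}}

/-- The Kuratowski measure of non compactness on `X*`. -/
def kur (A : Set (WeakDual ℝ X)) : ℝ := kurN dnorm A

/-- The iterated sets `A^ε_β` of the convex Szlenk derivation: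
`A^ε_{β+1}` is the weak*-closed convex hull of `[σ]'_ε(A^ε_β)`. -/
def convIter (ε : ℝ) (K : Set (WeakDual ℝ X)) (γ : Ordinal.{0}) : Set (WeakDual ℝ X) :=
  Ordinal.limitRecOn γ K (fun _ S => closure (convexHull ℝ (frag kur ε S)))
    (fun γ _ ih => ⋂ β : {β : Ordinal.{0} // β < γ}, ih β.1 β.2)

/-- The families `𝒯_α` of trees on `ℕ`. A tree is a set of finite sequences of
naturals (closed under initial segments); the root is the empty sequence, and
`(n)⌢s` is represented by `n :: s`. `𝒯_0 = {{∅}}`, and `T ∈ 𝒯_α` for `α ≥ 1` if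
`T = {∅} ∪ ⋃_k (n_k)⌢T_k` with `n_k` strictly increasing, `T_k ∈ 𝒯_{α_k}`, where
`α_k = β` for all `k` if `α = β + 1`, and `α_k ↗ α` if `α` is a limit ordinal. -/
inductive IsTreeFam : Ordinal.{0} → Set (List ℕ) → Prop
  | zero : IsTreeFam 0 {[]}
  | node {α : Ordinal.{0}} (nk : ℕ → ℕ) (αk : ℕ → Ordinal.{0}) (Tk : ℕ → Set (List ℕ))
      (hnk : StrictMono nk) (hTk : ∀ k, IsTreeFam (αk k) (Tk k))
      (hα : (∃ β, α = β + 1 ∧ ∀ k, αk k = β) ∨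
            (Order.IsSuccLimit α ∧ StrictMono αk ∧ α = ⨆ k, αk k)) :
      IsTreeFam α ({[]} ∪ ⋃ k, (List.cons (nk k)) '' Tk k)

/-- A family `(x_s)_{s ∈ T}` is weak*-continuous: `x_{s⌢n} → x_s` (in the ambient,
i.e. weak*, topology) along the children of every node `s` of `T`. -/
def IsContFam [TopologicalSpace E] (T : Set (List ℕ)) (x : List ℕ → E) : Prop :=
  ∀ s ∈ T, Tendsto (fun n : ℕ => x (s ++ [n]))
    (atTop ⊓ 𝓟 {n : ℕ | s ++ [n] ∈ T}) (𝓝 (x s))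

/-- A family `(x_s)_{s ∈ T}` in `X*` is `ε`-separated: `‖x_s - x_{s⌢n}‖ ≥ ε`. -/
def IsSepFam (ε : ℝ) (T : Set (List ℕ)) (x : List ℕ → WeakDual ℝ X) : Prop :=
  ∀ s ∈ T, ∀ n : ℕ, s ++ [n] ∈ T → ε ≤ dnorm (x s - x (s ++ [n]))

/-- Norm distance from a point of `X*` to a subset of `X*`. -/
def ddist (f : WeakDual ℝ X) (A : Set (WeakDual ℝ X)) : ℝ :=
  sInf ((fun g => dnorm (f - g)) '' A)

/-- The product `η₁ × η₂` of two measures of non compactness. -/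
def prodMNC {X₁ X₂ : Type*} [NormedAddCommGroup X₁] [NormedSpace ℝ X₁]
    [NormedAddCommGroup X₂] [NormedSpace ℝ X₂]
    (η₁ : Set (WeakDual ℝ X₁) → ℝ) (η₂ : Set (WeakDual ℝ X₂) → ℝ)
    (A : Set (WeakDual ℝ X₁ × WeakDual ℝ X₂)) : ℝ :=
  sInf {ε : ℝ | 0 < ε ∧ ∃ (n : ℕ) (A₁ : Fin n → Set (WeakDual ℝ X₁))
      (A₂ : Fin n → Set (WeakDual ℝ X₂)),
      (∀ i, IsCompact (A₁ i) ∧ IsCompact (A₂ i) ∧ η₁ (A₁ i) < ε ∧ η₂ (A₂ i) < ε) ∧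
      A ⊆ ⋃ i, A₁ i ×ˢ A₂ i}

/-- The dual norm on `X*` associated to an (equivalent) norm `N` on `X`. -/
def dualNormOf (N : X → ℝ) (f : WeakDual ℝ X) : ℝ :=
  sSup ((fun x => f x) '' {x : X | N x ≤ 1})

/-- The closed unit ball of the dual norm associated to a norm `N` on `X`. -/
def dualBallOf (N : X → ℝ) : Set (WeakDual ℝ X) :=
  {f : WeakDual ℝ X | ∀ x : X, |f x| ≤ N x}

/-!
If `y ∈ T(A)` had no preimage in `[η₁]'_ε(A)`, the compact fibre `A ∩ T⁻¹{y}` would lie in the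
interior `V` of a finite union of sets `U` with `η₁(A ∩ cl U) < ε`. Away from `V`, `T(A \ V)` is a
compact set missing `y`, so some closed neighbourhood `W` of `y` satisfies
`T(A) ∩ W ⊆ ⋃ T(A ∩ cl U)`, and domination together with the max rule for unions gives
`η₂(T(A) ∩ W) < λε`, contradicting `y ∈ [η₂]'_{λε}(T(A))`. Iterating gives
`[η₂]^n_{λε}(T(A)) ⊆ T([η₁]^n_ε(A))`, and by compactness `[η₁]^ω_ε(A) = ∅` forces some finite
iterate `[η₁]^n_ε(A)` to be empty.
-/

section Frag

variable {E : Type*} [TopologicalSpace E] {η : Set E → ℝ} {ε : ℝ} {A B : Set E}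

theorem frag_subset : frag η ε A ⊆ A := fun _ h => h.1

theorem isOpen_setOf_exists_mem_nhds (q : Set E → Prop) : IsOpen {x | ∃ U ∈ 𝓝 x, q U} := by
  have : {x | ∃ U ∈ 𝓝 x, q U} = ⋃ U ∈ {U | q U}, interior U := by
    ext x
    simp [mem_interior_iff_mem_nhds, and_comm]
  rw [this]
  exact isOpen_biUnion fun _ _ => isOpen_interior

theorem isCompact_frag (hA : IsCompact A) : IsCompact (frag η ε A) := by
  have hclosed : IsClosed {x | ∀ U ∈ 𝓝 x, ε ≤ η (A ∩ closure U)} := by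
    simpa only [← isOpen_compl_iff, compl_ofPred, not_forall, not_le, exists_prop] using
      isOpen_setOf_exists_mem_nhds fun U => η (A ∩ closure U) < ε
  exact hA.inter_right hclosed

theorem isCompact_iterate_frag (hA : IsCompact A) (n : ℕ) : IsCompact ((frag η ε)^[n] A) :=
  Function.Iterate.rec IsCompact hA (fun _ => isCompact_frag) n

theorem frag_mono (hη : MonotoneOn η {S | IsCompact S}) (hA : IsCompact A) (hB : IsCompact B)
    (hAB : A ⊆ B) : frag η ε A ⊆ frag η ε B := fun _ ⟨hxA, hx⟩ =>
  ⟨hAB hxA, fun U hU => (hx U hU).trans <| hη (hA.inter_right isClosed_closure)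
    (hB.inter_right isClosed_closure) (inter_subset_inter_left _ hAB)⟩

theorem fragIter_natCast (η : Set E → ℝ) (ε : ℝ) (A : Set E) (n : ℕ) :
    fragIter η ε A n = (frag η ε)^[n] A := by
  induction n with
  | zero => exact Ordinal.limitRecOn_zero ..
  | succ n ih =>
    rw [Nat.cast_succ, Function.iterate_succ_apply', ← ih]
    exact Ordinal.limitRecOn_add_one ..

theorem fragIter_omega0 (η : Set E → ℝ) (ε : ℝ) (A : Set E) :
    fragIter η ε A Ordinal.omega0 = ⋂ n : ℕ, (frag η ε)^[n] A := by
  rw [fragIter, Ordinal.limitRecOn_limit _ _ _ _ Ordinal.isSuccLimit_omega0]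
  ext x
  simp only [mem_iInter, Subtype.forall, ← fragIter_natCast]
  refine ⟨fun h n => h n (Ordinal.natCast_lt_omega0 n), fun h β hβ => ?_⟩
  obtain ⟨n, rfl⟩ := Ordinal.lt_omega0.1 hβ
  exact h n

theorem fragIter_omega0_eq_empty_iff [T2Space E] (hA : IsCompact A) :
    fragIter η ε A Ordinal.omega0 = ∅ ↔ ∃ n : ℕ, (frag η ε)^[n] A = ∅ := by
  rw [fragIter_omega0]
  refine ⟨fun h => ?_, fun ⟨n, hn⟩ => subset_empty_iff.1 (hn ▸ iInter_subset _ n)⟩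
  by_contra! hne
  refine (IsCompact.nonempty_iInter_of_sequence_nonempty_isCompact_isClosed _ (fun n => ?_)
    hne hA
    (fun n => (isCompact_iterate_frag hA n).isClosed)).ne_empty h
  rw [Function.iterate_succ_apply']
  exact frag_subset

theorem exists_finset_of_disjoint_frag {K : Set E} (hK : IsCompact K) (hKA : K ⊆ A)
    (hdisj : Disjoint K (frag η ε A)) :
    ∃ t : Finset (Set E), (∀ U ∈ t, η (A ∩ closure U) < ε) ∧ K ⊆ interior (⋃ U ∈ t, U) := by
  classical
  have hsmall : ∀ x ∈ K, ∃ U ∈ 𝓝 x, η (A ∩ closure U) < ε := fun x hx => by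
    by_contra! h
    exact disjoint_left.1 hdisj hx ⟨hKA hx, h⟩
  choose! U hU hUε using hsmall
  obtain ⟨s, hsK, hcover⟩ :=
    hK.elim_nhds_subcover (fun x => interior (U x)) fun x hx => interior_mem_nhds.2 (hU x hx)
  refine ⟨s.image U, by simpa using fun x hx => hUε x (hsK x hx), hcover.trans ?_⟩
  rw [Finset.set_biUnion_finset_image]
  exact iUnion₂_subset fun x hx => interior_mono (subset_biUnion_of_mem (u := U) hx)

end Frag

theorem IsMNCOn.apply_empty_le {E : Type*} [TopologicalSpace E] [AddCommGroup E] [Module ℝ E]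
    {ball : Set E} {η : Set E → ℝ} (h : IsMNCOn ball η) : η ∅ ≤ 0 := by
  simpa [h.singleton 0] using h.mono ∅ {0} isCompact_empty isCompact_singleton (empty_subset _)

theorem IsMNCOn.apply_biUnion_lt {E : Type*} [TopologicalSpace E] [AddCommGroup E] [Module ℝ E]
    {ball : Set E} {η : Set E → ℝ} (h : IsMNCOn ball η) {c : ℝ} (hc : 0 < c) {ι : Type*}
    (t : Finset ι) {f : ι → Set E} (hf : ∀ i ∈ t, IsCompact (f i)) (hfc : ∀ i ∈ t, η (f i) < c) :
    η (⋃ i ∈ t, f i) < c := by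
  classical
  induction t using Finset.induction_on with
  | empty => simpa using h.apply_empty_le.trans_lt hc
  | insert a s ha ih =>
    simp only [Finset.mem_insert, forall_eq_or_imp] at hf hfc
    rw [Finset.set_biUnion_insert, h.union _ _ hf.1 (s.isCompact_biUnion hf.2)]
    exact max_lt hfc.1 (ih hf.2 hfc.2)

section Dominated

variable {E F : Type*} [TopologicalSpace E] [TopologicalSpace F] [AddCommGroup F] [Module ℝ F]
  [T2Space F] [RegularSpace F] {ball : Set F} {η₁ : Set E → ℝ} {η₂ : Set F → ℝ}
  {T : E → F} {lam ε : ℝ} {A : Set E}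

theorem frag_image_subset_image_frag (h₂ : IsMNCOn ball η₂) (hT : Continuous T)
    (hlam : 0 < lam) (hdom : ∀ A : Set E, IsCompact A → η₂ (T '' A) ≤ lam * η₁ A)
    (hA : IsCompact A) (hε : 0 < ε) : frag η₂ (lam * ε) (T '' A) ⊆ T '' frag η₁ ε A := by
  rintro y ⟨-, hy⟩
  by_contra hyfrag
  have hfibre : Disjoint (A ∩ T ⁻¹' {y}) (frag η₁ ε A) :=
    disjoint_left.2 fun x ⟨_, hxy⟩ hx => hyfrag ⟨x, hx, hxy⟩
  obtain ⟨t, htε, hcover⟩ := exists_finset_of_disjoint_frag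
    (hA.inter_right (isClosed_singleton.preimage hT)) inter_subset_left hfibre
  set V := interior (⋃ U ∈ t, U)
  have hyV : y ∉ T '' (A \ V) := fun ⟨x, ⟨hxA, hxV⟩, hxy⟩ => hxV (hcover ⟨hxA, hxy⟩)
  obtain ⟨W, hW, hWclosed, hWV⟩ := exists_mem_nhds_isClosed_subset
    (((hA.diff isOpen_interior).image hT).isClosed.isOpen_compl.mem_nhds hyV)
  have hcompact : ∀ U ∈ t, IsCompact (T '' (A ∩ closure U)) := fun U _ =>
    (hA.inter_right isClosed_closure).image hT
  have hsub : T '' A ∩ W ⊆ ⋃ U ∈ t, T '' (A ∩ closure U) := by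
    rintro _ ⟨⟨x, hxA, rfl⟩, hxW⟩
    have hxV : x ∈ ⋃ U ∈ t, U :=
      interior_subset <| by_contra fun hxV => hWV hxW ⟨x, ⟨hxA, hxV⟩, rfl⟩
    obtain ⟨U, hUt, hxU⟩ := mem_iUnion₂.1 hxV
    exact mem_biUnion hUt ⟨x, ⟨hxA, subset_closure hxU⟩, rfl⟩
  have hlarge : lam * ε ≤ η₂ (T '' A ∩ W) := hWclosed.closure_eq ▸ hy W hW
  have hsmall : η₂ (⋃ U ∈ t, T '' (A ∩ closure U)) < lam * ε :=
    h₂.apply_biUnion_lt (by positivity) t hcompact fun U hU =>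
      (hdom _ (hA.inter_right isClosed_closure)).trans_lt
        (mul_lt_mul_of_pos_left (htε U hU) hlam)
  exact (hlarge.trans (h₂.mono _ _ ((hA.image hT).inter_right hWclosed)
    (t.isCompact_biUnion hcompact) hsub)).not_gt hsmall

theorem iterate_frag_image_subset_image_iterate_frag (h₂ : IsMNCOn ball η₂) (hT : Continuous T)
    (hlam : 0 < lam) (hdom : ∀ A : Set E, IsCompact A → η₂ (T '' A) ≤ lam * η₁ A)
    (hA : IsCompact A) (hε : 0 < ε) (n : ℕ) :
    (frag η₂ (lam * ε))^[n] (T '' A) ⊆ T '' (frag η₁ ε)^[n] A := by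
  induction n with
  | zero => exact subset_rfl
  | succ n ih =>
    have hA' := isCompact_iterate_frag (η := η₁) (ε := ε) hA n
    rw [Function.iterate_succ_apply', Function.iterate_succ_apply']
    exact (frag_mono (fun _ hS _ hS' => h₂.mono _ _ hS hS') (isCompact_iterate_frag (hA.image hT) n)
      (hA'.image hT) ih).trans (frag_image_subset_image_frag h₂ hT hlam hdom hA' hε)

end Dominated

theorem frag_image_of_dominated_general
    {X₁ X₂ : Type*} [NormedAddCommGroup X₁] [NormedSpace ℝ X₁]
    [NormedAddCommGroup X₂] [NormedSpace ℝ X₂]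
    (η₁ : Set (WeakDual ℝ X₁) → ℝ) (η₂ : Set (WeakDual ℝ X₂) → ℝ)
    (h₂ : IsMNCOn (dualBall X₂) η₂)
    (T : WeakDual ℝ X₁ →L[ℝ] WeakDual ℝ X₂) (lam : ℝ) (hlam : 0 < lam)
    (hT : ∀ A : Set (WeakDual ℝ X₁), IsCompact A → η₂ (⇑T '' A) ≤ lam * η₁ A) :
    (∀ A : Set (WeakDual ℝ X₁), IsCompact A → ∀ ε : ℝ, 0 < ε →
      frag η₂ (lam * ε) (⇑T '' A) ⊆ ⇑T '' frag η₁ ε A) ∧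
    (∀ A : Set (WeakDual ℝ X₁), IsCompact A → ∀ ε : ℝ, 0 < ε →
      fragIter η₁ ε A Ordinal.omega0 = ∅ →
      fragIter η₂ (lam * ε) (⇑T '' A) Ordinal.omega0 = ∅) := by
  refine ⟨fun A hA ε hε => frag_image_subset_image_frag h₂ T.continuous hlam hT hA hε,
    fun A hA ε hε hempty => ?_⟩
  obtain ⟨n, hn⟩ := (fragIter_omega0_eq_empty_iff hA).1 hempty
  refine (fragIter_omega0_eq_empty_iff (hA.image T.continuous)).2 ⟨n, subset_empty_iff.1 ?_⟩
  simpa [hn] using iterate_frag_image_subset_image_iterate_frag h₂ T.continuous hlam hT hA hε n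

/-- Let `T : X₁* → X₂*` be a weak*-continuous linear operator and suppose
`η₂(T(A)) ≤ lam * η₁(A)` for every weak*-compact `A ⊆ X₁*`. Then
(1) `[η₂]'_{lam ε}(T(A)) ⊆ T([η₁]'_ε(A))`;
(2) if `[η₁]^ω_ε(A) = ∅` then `[η₂]^ω_{lam ε}(T(A)) = ∅`. -/
theorem frag_image_of_dominated
    {X₁ X₂ : Type*} [NormedAddCommGroup X₁] [NormedSpace ℝ X₁] [CompleteSpace X₁]
    [NormedAddCommGroup X₂] [NormedSpace ℝ X₂] [CompleteSpace X₂]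
    (η₁ : Set (WeakDual ℝ X₁) → ℝ) (η₂ : Set (WeakDual ℝ X₂) → ℝ)
    (h₁ : IsMNCOn (dualBall X₁) η₁) (h₂ : IsMNCOn (dualBall X₂) η₂)
    (T : WeakDual ℝ X₁ →L[ℝ] WeakDual ℝ X₂) (lam : ℝ) (hlam : 0 < lam)
    (hT : ∀ A : Set (WeakDual ℝ X₁), IsCompact A → η₂ (⇑T '' A) ≤ lam * η₁ A) :
    (∀ A : Set (WeakDual ℝ X₁), IsCompact A → ∀ ε : ℝ, 0 < ε →
      frag η₂ (lam * ε) (⇑T '' A) ⊆ ⇑T '' frag η₁ ε A) ∧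
    (∀ A : Set (WeakDual ℝ X₁), IsCompact A → ∀ ε : ℝ, 0 < ε →
      fragIter η₁ ε A Ordinal.omega0 = ∅ →
      fragIter η₂ (lam * ε) (⇑T '' A) Ordinal.omega0 = ∅) :=
  frag_image_of_dominated_general η₁ η₂ h₂ T lam hlam hT

end Szlenk
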